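/- arXiv:2601.00474 — 2 statements merged into one kernel-verified Lean document; each statement's English description precedes it below -/
import Mathlib

section
/- The number of years y' with 1583 ≤ y' ≤ y of the form y' = 1800 + 300k + 2500m (k ∈ {0,...,7}, m ∈ ℕ) equals ⌊(8·C(y) + 5)/25⌋ - 5, where C(y) = ⌊y/100⌋ + 1, for all y ≥ 1582. -/
set_option maxHeartbeats 2000000


open Classical in
/-- The number of lunar-correction years between 1583 and `y`, i.e. years of the form
`1800 + 300k + 2500m` with `k ∈ {0,…,7}` and `m ∈ ℕ`, equals `⌊(8·C(y)+5)/25⌋ - 5`,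
where `C(y) = ⌊y/100⌋ + 1`. -/
theorem lunar_correction_count (y : ℕ) (hy : 1582 ≤ y) :
    (∑ y' ∈ Finset.Icc 1583 y,
        if ∃ k ≤ 7, ∃ m : ℕ, y' = 1800 + 300 * k + 2500 * m then 1 else 0) =
      (8 * (y / 100 + 1) + 5) / 25 - 5 := by
  induction y, hy using Nat.le_induction with
  | base => norm_num
  | succ y hy ih =>
    rw [← Nat.succ_sub_one (y + 1), Nat.succ_sub_one]
    rw [Finset.sum_Icc_succ_top (by omega : 1583 ≤ y + 1), ih]
    by_cases h : ∃ k ≤ 7, ∃ m : ℕ, y + 1 = 1800 + 300 * k + 2500 * m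
    · rw [if_pos h]
      obtain ⟨k, hk, m, hm⟩ := h
      interval_cases k <;> omega
    · rw [if_neg h]
      push_neg at h
      have h0 := h 0 (by norm_num) ((y + 1 - 1800) / 2500)
      have h1 := h 1 (by norm_num) ((y + 1 - 2100) / 2500)
      have h2 := h 2 (by norm_num) ((y + 1 - 2400) / 2500)
      have h3 := h 3 (by norm_num) ((y + 1 - 2700) / 2500)
      have h4 := h 4 (by norm_num) ((y + 1 - 3000) / 2500)
      have h5 := h 5 (by norm_num) ((y + 1 - 3300) / 2500)
      have h6 := h 6 (by norm_num) ((y + 1 - 3600) / 2500)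
      have h7 := h 7 (by norm_num) ((y + 1 - 3900) / 2500)
      omega
end

section
/- For every year y, the age of the moon on December 31 is A(y,12,31) = ((E(y) + 10) mod 30) + 1. -/
/-- The function `g` used in computing the age of the ecclesiastical moon. -/
def eccgMoon (x : ℕ) : ℕ := ((x + x / 59) % 30) + 1

/-- Day number of day `d` of month `m`. -/
def dayNumber (m d : ℕ) : ℕ :=
  d - 1 + 30 * (m - 1) + (7 * m - 2) / 12 - 2 * ((m + 9) / 12)

/-- The age of the ecclesiastical moon on day `d` of month `m`, in a year with
epact `E` and golden number `G`. -/
def moonAge (E G m d : ℕ) : ℕ :=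
  if E < 25 ∨ (E = 25 ∧ 12 ≤ G) then eccgMoon (E + dayNumber m d)
  else eccgMoon (E + dayNumber m d + 29) + (if dayNumber m d + E < 30 then 1 else 0)

/-- On December 31 the age of the moon is `((E + 10) mod 30) + 1`. -/
theorem moonAge_dec31 (E G : ℕ) (hE : E ≤ 29) :
    moonAge E G 12 31 = (E + 10) % 30 + 1 := by
  interval_cases E <;> simp [moonAge, eccgMoon, dayNumber]
end
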